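/- For all elements x₁, x₂, x₃, x₄, y₁, y₂, y₃, y₄ of a commutative ring, y₁² · Q(x₁,x₂,x₃,x₄,y₁,y₂,y₃,y₄) = (x₁y₁² − x₂y₂y₁ − x₃y₃y₁ − x₄y₄y₁ − 2x₂x₃x₄)² − 4(x₂x₃ + y₁y₄)(x₂x₄ + y₁y₃)(x₃x₄ + y₁y₂). -/
import Mathlib


/-- The homogenised regular quadruple polynomial. -/
def Q {R : Type*} [CommRing R] (x1 x2 x3 x4 y1 y2 y3 y4 : R) : R :=
  x1^2*y1^2 + x2^2*y2^2 + x3^2*y3^2 + x4^2*y4^2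
    - 4*x1*x2*x3*x4 - 4*y1*y2*y3*y4
    - 2*x1*y1*x2*y2 - 2*x1*y1*x3*y3 - 2*x1*y1*x4*y4
    - 2*x2*y2*x3*y3 - 2*x2*y2*x4*y4 - 2*x3*y3*x4*y4

theorem Q_identity_thirteen {R : Type*} [CommRing R] (x1 x2 x3 x4 y1 y2 y3 y4 : R) :
    y1^2 * Q x1 x2 x3 x4 y1 y2 y3 y4 =
      (x1*y1^2 - x2*y2*y1 - x3*y3*y1 - x4*y4*y1 - 2*x2*x3*x4)^2
        - 4*(x2*x3 + y1*y4)*(x2*x4 + y1*y3)*(x3*x4 + y1*y2) := by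
  unfold Q; ring
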